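/- arXiv:2008.08953 — 9 statements merged into one kernel-verified Lean document; each statement's English description precedes it below -/
import Mathlib

section
/- Let (A, σ) be a central simple F-algebra with involution such that every nontrivial right ideal I of A satisfies dim_F I = ½ dim_F A. If σ is isotropic (i.e. there exists x ∈ A, x ≠ 0, with σ(x)x = 0), then σ is metabolic: there exists e ∈ A with e² = e, σ(e)e = 0, and dim_F eA = ½ dim_F A. -/
open Module

/-- Let `(A, σ)` be a central simple `F`-algebra with involution such that every
nontrivial right ideal `I` of `A` satisfies `dim_F I = ½ dim_F A` (right ideals are `F`-subspaces
closed under right multiplication; in a central simple algebra every right ideal is generated by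
an idempotent).  If `σ` is isotropic (there is `x ≠ 0` with `σ(x)·x = 0`), then `σ` is metabolic:
there is `e` with `e² = e`, `σ(e)·e = 0` and `dim_F (eA) = ½ dim_F A`. -/
theorem isotropic_imp_metabolic_of_half_dim_ideals
    {F A : Type*} [Field F] [Ring A] [Algebra F A] [FiniteDimensional F A]
    (hsimple : IsSimpleRing A) (hcentral : Subalgebra.center F A = ⊥)
    (σ : A →ₗ[F] A)
    (hanti : ∀ x y : A, σ (x * y) = σ y * σ x)
    (hinvol : ∀ x : A, σ (σ x) = x)
    (hidem : ∀ x : A, x ≠ 0 →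
      ∃ e : A, e * e = e ∧ Set.range (fun a => x * a) = Set.range (fun a => e * a))
    (hhalf : ∀ I : Submodule F A, (∀ x ∈ I, ∀ a : A, x * a ∈ I) → I ≠ ⊥ → I ≠ ⊤ →
      2 * finrank F I = finrank F A)
    (hiso : ∃ x : A, x ≠ 0 ∧ σ x * x = 0) :
    ∃ e : A, e * e = e ∧ σ e * e = 0 ∧
      2 * finrank F (LinearMap.range (LinearMap.mulLeft F e)) = finrank F A := by
  haveI : IsSimpleRing A := hsimple
  haveI : Nontrivial A := inferInstance
  obtain ⟨x, hx0, hxx⟩ := hiso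
  obtain ⟨e, he, hrange⟩ := hidem x hx0
  -- e = x * b for some b
  have hmem : e ∈ Set.range (fun a => x * a) := by
    rw [hrange]; exact ⟨e, he⟩
  obtain ⟨b, hb⟩ := hmem
  have hσe : σ e * e = 0 := by
    have : σ e * e = σ b * ((σ x * x) * b) := by
      rw [← hb, hanti, mul_assoc, mul_assoc]
    rw [this, hxx, zero_mul, mul_zero]
  refine ⟨e, he, hσe, ?_⟩
  -- the range submodule
  set I := LinearMap.range (LinearMap.mulLeft F e) with hI
  have hIcarrier : ∀ z : A, z ∈ I ↔ ∃ a, e * a = z := by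
    intro z
    simp [hI, LinearMap.mem_range, LinearMap.mulLeft_apply]
  have hright : ∀ z ∈ I, ∀ a : A, z * a ∈ I := by
    intro z hz a
    obtain ⟨c, hc⟩ := (hIcarrier z).mp hz
    exact (hIcarrier _).mpr ⟨c * a, by rw [← hc, mul_assoc]⟩
  have hxmem : x ∈ I := by
    have : x ∈ Set.range (fun a => e * a) := by
      rw [← hrange]; exact ⟨1, mul_one x⟩
    obtain ⟨a, ha⟩ := this
    exact (hIcarrier x).mpr ⟨a, ha⟩
  have hne_bot : I ≠ ⊥ := by
    intro h
    rw [h, Submodule.mem_bot] at hxmem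
    exact hx0 hxmem
  have hne_top : I ≠ ⊤ := by
    intro h
    have h1 : (1 : A) ∈ I := h ▸ Submodule.mem_top
    obtain ⟨c, hc⟩ := (hIcarrier 1).mp h1
    have hσe0 : σ e = 0 := by
      have : σ e * (e * c) = 0 := by rw [← mul_assoc, hσe, zero_mul]
      rwa [hc, mul_one] at this
    have : e = 0 := by
      have := hinvol e
      rw [hσe0, map_zero] at this
      exact this.symm
    rw [this, zero_mul] at hc
    exact zero_ne_one hc
  exact hhalf I hright hne_bot hne_top
end

section
/- Let Q₁, Q₂, Q₃ be quaternion algebras over a field F of characteristic ≠ 2, with standard generators uᵢ, vᵢ ∈ Qᵢ satisfying uᵢ² = aᵢ, vᵢ² = bᵢ (aᵢ, bᵢ ∈ F×), uᵢvᵢ = -vᵢuᵢ. In A = Q₁ ⊗ Q₂ ⊗ Q₃ with involution σ = can₁ ⊗ can₂ ⊗ can₃ (tensor product of canonical symplectic involutions), the 6-dimensional subspace V = (Fu₁ ⊕ Fv₁ ⊕ Fu₁v₁)u₃ ⊕ (Fu₂ ⊕ Fv₂ ⊕ Fu₂v₂)v₃ consists of σ-symmetric elements, every x ∈ V satisfies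 x² ∈ F, and the map q : V → F, x ↦ x², is a quadratic form isometric to a₃⟨a₁, b₁, -a₁b₁⟩ ⊥ b₃⟨a₂, b₂, -a₂b₂⟩. -/
open Module

section Aux

variable {F A : Type*} [Field F] [Ring A] [Algebra F A]

/-- Rearrangement: `(p*q)*(r*s) = (p*r)*(q*s)` when `q` and `r` commute. -/
private lemma lswap (p q r s : A) (h : Commute q r) :
    (p * q) * (r * s) = (p * r) * (q * s) := by
  rw [mul_assoc, ← mul_assoc q r s, h.eq, mul_assoc r q s, ← mul_assoc]

private lemma lsq (x w : A) (cxw : Commute x w) (sx sw : F)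
    (hx : x * x = algebraMap F A sx) (hw : w * w = algebraMap F A sw) :
    (x * w) * (x * w) = algebraMap F A (sx * sw) := by
  rw [lswap x w x w cxw.symm, hx, hw, ← map_mul]

private lemma lanti (x y w : A) (hxy : x * y = -(y * x))
    (cxw : Commute x w) (cyw : Commute y w) :
    (x * w) * (y * w) = -((y * w) * (x * w)) := by
  rw [lswap x w y w cyw.symm, lswap y w x w cxw.symm, hxy, neg_mul]

private lemma lcross (x w y z : A) (cwy : Commute w y) (cxy : Commute x y)
    (cxz : Commute x z) (hwz : w * z = -(z * w)) :
    (x * w) * (y * z) = -((y * z) * (x * w)) := by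
  rw [lswap x w y z cwy, lswap y z x w cxz.symm, hwz, ← cxy.eq, mul_neg]

/-- Square of a linear combination of pairwise anticommuting elements with
scalar squares. -/
private lemma sq_sum_of_anticomm (h2 : (2 : F) ≠ 0) (e : Fin 6 → A) (s : Fin 6 → F)
    (hsq : ∀ i, e i * e i = algebraMap F A (s i))
    (hac : ∀ i j, i ≠ j → e i * e j = -(e j * e i)) (c : Fin 6 → F) :
    (∑ i, c i • e i) * (∑ i, c i • e i) = algebraMap F A (∑ i, c i * c i * s i) := by
  have hterm : ∀ i j : Fin 6, (c i • e i) * (c j • e j) = (c i * c j) • (e i * e j) := by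
    intro i j
    rw [smul_mul_assoc, mul_smul_comm, smul_smul]
  rw [Finset.sum_mul_sum]
  simp_rw [hterm]
  set g : Fin 6 → Fin 6 → A := fun i j => (c i * c j) • (e i * e j) with hg
  have hsplit : ∀ i : Fin 6, ∑ j, g i j
      = g i i + ∑ j, (if i = j then 0 else g i j) := by
    intro i
    have : ∀ j : Fin 6, g i j
        = (if i = j then g i j else 0) + (if i = j then 0 else g i j) := by
      intro j; split <;> simp
    rw [Finset.sum_congr rfl fun j _ => this j, Finset.sum_add_distrib,
      Finset.sum_ite_eq]
    simp
  have hS : ∑ i : Fin 6, ∑ j, (if i = j then 0 else g i j) = 0 := by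
    set S := ∑ i : Fin 6, ∑ j, (if i = j then 0 else g i j) with hSdef
    have hneg : S = -S := by
      conv_lhs => rw [hSdef, Finset.sum_comm]
      rw [hSdef]
      rw [← Finset.sum_neg_distrib]
      refine Finset.sum_congr rfl fun j _ => ?_
      rw [← Finset.sum_neg_distrib]
      refine Finset.sum_congr rfl fun i _ => ?_
      by_cases h : i = j
      · simp [h]
      · have h' : ¬ j = i := fun hh => h hh.symm
        rw [if_neg h', if_neg h, hg]
        simp only
        rw [hac i j h, smul_neg, mul_comm (c i) (c j)]
    have h2S : (2 : F) • S = 0 := by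
      rw [two_smul]
      nth_rewrite 1 [hneg]
      exact neg_add_cancel S
    have := congrArg (fun t => (2 : F)⁻¹ • t) h2S
    simpa [smul_smul, inv_mul_cancel₀ h2] using this
  calc ∑ i : Fin 6, ∑ j, g i j
      = ∑ i : Fin 6, (g i i + ∑ j, (if i = j then 0 else g i j)) :=
        Finset.sum_congr rfl fun i _ => hsplit i
    _ = ∑ i : Fin 6, g i i + ∑ i : Fin 6, ∑ j, (if i = j then 0 else g i j) :=
        Finset.sum_add_distrib
    _ = ∑ i : Fin 6, g i i := by rw [hS, add_zero]
    _ = algebraMap F A (∑ i, c i * c i * s i) := by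
        rw [map_sum]
        refine Finset.sum_congr rfl fun i _ => ?_
        rw [hg]
        simp only
        rw [hsq i, map_mul, Algebra.smul_def, map_mul]

end Aux

/-- Let `char F ≠ 2` and let `Q₁, Q₂, Q₃` be quaternion `F`-algebras with standard
generators `uᵢ, vᵢ` (`uᵢ² = aᵢ`, `vᵢ² = bᵢ`, `uᵢvᵢ = -vᵢuᵢ`, `aᵢ, bᵢ ∈ F×`), realised inside
`A = Q₁ ⊗ Q₂ ⊗ Q₃` (so elements of different factors commute), and let `σ = can₁ ⊗ can₂ ⊗ can₃`
(so `σ(uᵢ) = -uᵢ`, `σ(vᵢ) = -vᵢ`).  Then the 6-dimensional subspace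
`V = (Fu₁ ⊕ Fv₁ ⊕ Fu₁v₁)u₃ ⊕ (Fu₂ ⊕ Fv₂ ⊕ Fu₂v₂)v₃` consists of `σ`-symmetric elements,
every `x ∈ V` has `x² ∈ F`, and `q : V → F, x ↦ x²` is isometric to
`a₃⟨a₁,b₁,-a₁b₁⟩ ⊥ b₃⟨a₂,b₂,-a₂b₂⟩`. -/
theorem square_form_on_six_dim_space_char_ne_two
    {F A : Type*} [Field F] [Ring A] [Algebra F A]
    (hchar : ringChar F ≠ 2)
    (σ : A →ₗ[F] A)
    (hanti : ∀ x y : A, σ (x * y) = σ y * σ x)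
    (hinvol : ∀ x : A, σ (σ x) = x)
    (a b : Fin 3 → F) (ha : ∀ i, a i ≠ 0) (hb : ∀ i, b i ≠ 0)
    (u v : Fin 3 → A)
    (hu : ∀ i, u i * u i = algebraMap F A (a i))
    (hv : ∀ i, v i * v i = algebraMap F A (b i))
    (huv : ∀ i, u i * v i = -(v i * u i))
    (hcomm : ∀ i j, i ≠ j →
      Commute (u i) (u j) ∧ Commute (u i) (v j) ∧ Commute (v i) (v j))
    (hσu : ∀ i, σ (u i) = -u i) (hσv : ∀ i, σ (v i) = -v i)
    (hind : LinearIndependent F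
      ![u 0 * u 2, v 0 * u 2, u 0 * v 0 * u 2, u 1 * v 2, v 1 * v 2, u 1 * v 1 * v 2]) :
    (∀ x ∈ Submodule.span F (Set.range
        ![u 0 * u 2, v 0 * u 2, u 0 * v 0 * u 2, u 1 * v 2, v 1 * v 2, u 1 * v 1 * v 2]),
      σ x = x) ∧
    (∀ x ∈ Submodule.span F (Set.range
        ![u 0 * u 2, v 0 * u 2, u 0 * v 0 * u 2, u 1 * v 2, v 1 * v 2, u 1 * v 1 * v 2]),
      ∃ c : F, x * x = algebraMap F A c) ∧
    (∃ φ : (Fin 6 → F) ≃ₗ[F] (Submodule.span F (Set.range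
        ![u 0 * u 2, v 0 * u 2, u 0 * v 0 * u 2, u 1 * v 2, v 1 * v 2, u 1 * v 1 * v 2])),
      ∀ c : Fin 6 → F,
        ((φ c : A) * (φ c : A)) = algebraMap F A
          (a 2 * (a 0 * c 0 ^ 2 + b 0 * c 1 ^ 2 - a 0 * b 0 * c 2 ^ 2) +
           b 2 * (a 1 * c 3 ^ 2 + b 1 * c 4 ^ 2 - a 1 * b 1 * c 5 ^ 2))) := by
  have h2 : (2 : F) ≠ 0 := Ring.two_ne_zero hchar
  -- names for commuting generators
  have c01 := hcomm 0 1 (by decide)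
  have c02 := hcomm 0 2 (by decide)
  have c12 := hcomm 1 2 (by decide)
  have c10 := hcomm 1 0 (by decide)
  have c20 := hcomm 2 0 (by decide)
  have c21 := hcomm 2 1 (by decide)
  set e : Fin 6 → A :=
    ![u 0 * u 2, v 0 * u 2, u 0 * v 0 * u 2, u 1 * v 2, v 1 * v 2, u 1 * v 1 * v 2] with he
  -- squares of basis vectors
  set s : Fin 6 → F :=
    ![a 0 * a 2, b 0 * a 2, -(a 0 * b 0) * a 2, a 1 * b 2, b 1 * b 2, -(a 1 * b 1) * b 2]
    with hs
  have huv0' : v 0 * u 0 = -(u 0 * v 0) := by rw [huv 0, neg_neg]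
  have huv1' : v 1 * u 1 = -(u 1 * v 1) := by rw [huv 1, neg_neg]
  have huv2' : v 2 * u 2 = -(u 2 * v 2) := by rw [huv 2, neg_neg]
  have hsq01 : (u 0 * v 0) * (u 0 * v 0) = algebraMap F A (-(a 0 * b 0)) := by
    calc (u 0 * v 0) * (u 0 * v 0) = u 0 * (v 0 * u 0) * v 0 := by
          rw [mul_assoc, ← mul_assoc (v 0) (u 0) (v 0), ← mul_assoc]
      _ = -((u 0 * u 0) * (v 0 * v 0)) := by
          rw [huv0']; noncomm_ring
      _ = algebraMap F A (-(a 0 * b 0)) := by rw [hu 0, hv 0, ← map_mul, ← map_neg]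
  have hsq11 : (u 1 * v 1) * (u 1 * v 1) = algebraMap F A (-(a 1 * b 1)) := by
    calc (u 1 * v 1) * (u 1 * v 1) = u 1 * (v 1 * u 1) * v 1 := by
          rw [mul_assoc, ← mul_assoc (v 1) (u 1) (v 1), ← mul_assoc]
      _ = -((u 1 * u 1) * (v 1 * v 1)) := by
          rw [huv1']; noncomm_ring
      _ = algebraMap F A (-(a 1 * b 1)) := by rw [hu 1, hv 1, ← map_mul, ← map_neg]
  -- commute facts with composite elements
  have cu0u2 : Commute (u 0) (u 2) := c02.1
  have cv0u2 : Commute (v 0) (u 2) := (c20.2.1).symm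
  have cuv0u2 : Commute (u 0 * v 0) (u 2) := cu0u2.mul_left cv0u2
  have cu1v2 : Commute (u 1) (v 2) := c12.2.1
  have cv1v2 : Commute (v 1) (v 2) := c12.2.2
  have cuv1v2 : Commute (u 1 * v 1) (v 2) := cu1v2.mul_left cv1v2
  -- anticommuting within triple 0
  have a01 : u 0 * v 0 = -(v 0 * u 0) := huv 0
  have a02 : u 0 * (u 0 * v 0) = -((u 0 * v 0) * u 0) := by
    rw [show (u 0 * v 0) * u 0 = u 0 * (v 0 * u 0) from mul_assoc _ _ _, huv0']
    noncomm_ring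
  have a12 : v 0 * (u 0 * v 0) = -((u 0 * v 0) * v 0) := by
    rw [← mul_assoc, huv0']; noncomm_ring
  have b01 : u 1 * v 1 = -(v 1 * u 1) := huv 1
  have b02 : u 1 * (u 1 * v 1) = -((u 1 * v 1) * u 1) := by
    rw [show (u 1 * v 1) * u 1 = u 1 * (v 1 * u 1) from mul_assoc _ _ _, huv1']
    noncomm_ring
  have b12 : v 1 * (u 1 * v 1) = -((u 1 * v 1) * v 1) := by
    rw [← mul_assoc, huv1']; noncomm_ring
  -- cross commutes (index 0 elements vs index 1 elements)
  have cu0u1 : Commute (u 0) (u 1) := c01.1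
  have cu0v1 : Commute (u 0) (v 1) := c01.2.1
  have cv0u1 : Commute (v 0) (u 1) := (c10.2.1).symm
  have cv0v1 : Commute (v 0) (v 1) := c01.2.2
  have cu0uv1 : Commute (u 0) (u 1 * v 1) := cu0u1.mul_right cu0v1
  have cv0uv1 : Commute (v 0) (u 1 * v 1) := cv0u1.mul_right cv0v1
  have cuv0u1 : Commute (u 0 * v 0) (u 1) := cu0u1.mul_left cv0u1
  have cuv0v1 : Commute (u 0 * v 0) (v 1) := cu0v1.mul_left cv0v1
  have cuv0uv1 : Commute (u 0 * v 0) (u 1 * v 1) := cuv0u1.mul_right cuv0v1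
  -- index 0/1 elements commute with u2, v2
  have cu0v2 : Commute (u 0) (v 2) := c02.2.1
  have cv0v2 : Commute (v 0) (v 2) := c02.2.2
  have cuv0v2 : Commute (u 0 * v 0) (v 2) := cu0v2.mul_left cv0v2
  have cu1u2 : Commute (u 1) (u 2) := c12.1
  have cv1u2 : Commute (v 1) (u 2) := (c21.2.1).symm
  have cuv1u2 : Commute (u 1 * v 1) (u 2) := cu1u2.mul_left cv1u2
  have cu2u1 : Commute (u 2) (u 1) := cu1u2.symm
  have cu2v1 : Commute (u 2) (v 1) := cv1u2.symm
  have cu2uv1 : Commute (u 2) (u 1 * v 1) := cu2u1.mul_right cu2v1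
  -- squares of e i
  have hesq : ∀ i, e i * e i = algebraMap F A (s i) := by
    intro i
    fin_cases i
    · exact lsq _ _ cu0u2 _ _ (hu 0) (hu 2)
    · exact lsq _ _ cv0u2 _ _ (hv 0) (hu 2)
    · exact lsq _ _ cuv0u2 _ _ hsq01 (hu 2)
    · exact lsq _ _ cu1v2 _ _ (hu 1) (hv 2)
    · exact lsq _ _ cv1v2 _ _ (hv 1) (hv 2)
    · exact lsq _ _ cuv1v2 _ _ hsq11 (hv 2)
  -- anticommutation of e i, e j for i ≠ j
  have hac : ∀ i j, i ≠ j → e i * e j = -(e j * e i) := by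
    have key : ∀ i j, i < j → e i * e j = -(e j * e i) := by
      intro i j hij
      fin_cases i <;> fin_cases j <;> first
        | exact absurd hij (by decide)
        | exact lanti _ _ _ a01 cu0u2 cv0u2
        | exact lanti _ _ _ a02 cu0u2 cuv0u2
        | exact lanti _ _ _ a12 cv0u2 cuv0u2
        | exact lanti _ _ _ b01 cu1v2 cv1v2
        | exact lanti _ _ _ b02 cu1v2 cuv1v2
        | exact lanti _ _ _ b12 cv1v2 cuv1v2
        | exact lcross _ _ _ _ cu2u1 cu0u1 cu0v2 (huv 2)
        | exact lcross _ _ _ _ cu2v1 cu0v1 cu0v2 (huv 2)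
        | exact lcross _ _ _ _ cu2uv1 cu0uv1 cu0v2 (huv 2)
        | exact lcross _ _ _ _ cu2u1 cv0u1 cv0v2 (huv 2)
        | exact lcross _ _ _ _ cu2v1 cv0v1 cv0v2 (huv 2)
        | exact lcross _ _ _ _ cu2uv1 cv0uv1 cv0v2 (huv 2)
        | exact lcross _ _ _ _ cu2u1 cuv0u1 cuv0v2 (huv 2)
        | exact lcross _ _ _ _ cu2v1 cuv0v1 cuv0v2 (huv 2)
        | exact lcross _ _ _ _ cu2uv1 cuv0uv1 cuv0v2 (huv 2)
    intro i j hij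
    rcases lt_or_gt_of_ne hij with h | h
    · exact key i j h
    · have := key j i h
      rw [this, neg_neg]
  -- σ fixes each e i
  have hfix : ∀ i, σ (e i) = e i := by
    intro i
    fin_cases i
    · show σ (u 0 * u 2) = u 0 * u 2
      rw [hanti, hσu 0, hσu 2, neg_mul_neg, ← cu0u2.eq]
    · show σ (v 0 * u 2) = v 0 * u 2
      rw [hanti, hσv 0, hσu 2, neg_mul_neg, ← cv0u2.eq]
    · show σ (u 0 * v 0 * u 2) = u 0 * v 0 * u 2
      rw [hanti, hanti, hσu 0, hσv 0, hσu 2, neg_mul_neg, neg_mul, huv0', mul_neg,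
        neg_neg, ← cuv0u2.eq]
    · show σ (u 1 * v 2) = u 1 * v 2
      rw [hanti, hσu 1, hσv 2, neg_mul_neg, ← cu1v2.eq]
    · show σ (v 1 * v 2) = v 1 * v 2
      rw [hanti, hσv 1, hσv 2, neg_mul_neg, ← cv1v2.eq]
    · show σ (u 1 * v 1 * v 2) = u 1 * v 1 * v 2
      rw [hanti, hanti, hσu 1, hσv 1, hσv 2, neg_mul_neg, neg_mul, huv1', mul_neg,
        neg_neg, ← cuv1v2.eq]
  -- Part 1 : σ fixes the span
  have part1 : ∀ x ∈ Submodule.span F (Set.range e), σ x = x := by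
    have hle : Submodule.span F (Set.range e) ≤ LinearMap.eqLocus σ (LinearMap.id : A →ₗ[F] A) := by
      rw [Submodule.span_le]
      rintro x ⟨i, rfl⟩
      exact hfix i
    intro x hx
    exact hle hx
  -- the linear equivalence
  set φ : (Fin 6 → F) ≃ₗ[F] Submodule.span F (Set.range e) :=
    (Basis.span hind).equivFun.symm with hφ
  have hφval : ∀ c : Fin 6 → F, ((φ c : Submodule.span F (Set.range e)) : A) = ∑ i, c i • e i := by
    intro c
    rw [hφ]
    rw [Basis.equivFun_symm_apply]
    rw [AddSubmonoidClass.coe_finset_sum]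
    refine Finset.sum_congr rfl fun i _ => ?_
    rw [SetLike.val_smul, Basis.span_apply]
  have hsqval : ∀ c : Fin 6 → F,
      ((φ c : Submodule.span F (Set.range e)) : A) * ((φ c : Submodule.span F (Set.range e)) : A)
        = algebraMap F A
          (a 2 * (a 0 * c 0 ^ 2 + b 0 * c 1 ^ 2 - a 0 * b 0 * c 2 ^ 2) +
           b 2 * (a 1 * c 3 ^ 2 + b 1 * c 4 ^ 2 - a 1 * b 1 * c 5 ^ 2)) := by
    intro c
    rw [hφval c, sq_sum_of_anticomm h2 e s hesq hac c]
    congr 1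
    rw [Fin.sum_univ_six]
    show c 0 * c 0 * (a 0 * a 2) + c 1 * c 1 * (b 0 * a 2) + c 2 * c 2 * (-(a 0 * b 0) * a 2)
      + c 3 * c 3 * (a 1 * b 2) + c 4 * c 4 * (b 1 * b 2) + c 5 * c 5 * (-(a 1 * b 1) * b 2) = _
    ring
  refine ⟨part1, ?_, ⟨φ, hsqval⟩⟩
  -- Part 2
  intro x hx
  refine ⟨a 2 * (a 0 * (φ.symm ⟨x, hx⟩) 0 ^ 2 + b 0 * (φ.symm ⟨x, hx⟩) 1 ^ 2
      - a 0 * b 0 * (φ.symm ⟨x, hx⟩) 2 ^ 2) +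
    b 2 * (a 1 * (φ.symm ⟨x, hx⟩) 3 ^ 2 + b 1 * (φ.symm ⟨x, hx⟩) 4 ^ 2
      - a 1 * b 1 * (φ.symm ⟨x, hx⟩) 5 ^ 2), ?_⟩
  have := hsqval (φ.symm ⟨x, hx⟩)
  rwa [φ.apply_symm_apply] at this
end

section
/- Let F be a field of characteristic 2 and Q₁, Q₂, Q₃ quaternion F-algebras with generators uᵢ, vᵢ satisfying uᵢ² = aᵢ ∈ F×, vᵢ² = bᵢ ∈ F×, uᵢvᵢ + vᵢuᵢ = 1. In A = Q₁ ⊗ Q₂ ⊗ Q₃ with σ the tensor product of the canonical involutions, the 6-dimensional subspace V = Fu₁ ⊕ Fv₁ ⊕ Fu₂ ⊕ Fv₂ ⊕ Fu₃ ⊕ Fv₃ consists of σ-symmetric elements, x² ∈ F for all x ∈ V, and the quadratic form q(x) = x² on V is isometric to [a₁,b₁] ⊥ [a₂,b₂] ⊥ [a₃,b₃]. -/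
open Module

/-- Let `char F = 2` and let `Q₁, Q₂, Q₃` be quaternion `F`-algebras with
generators `uᵢ, vᵢ` (`uᵢ² = aᵢ ∈ F×`, `vᵢ² = bᵢ ∈ F×`, `uᵢvᵢ + vᵢuᵢ = 1`), realised inside
`A = Q₁ ⊗ Q₂ ⊗ Q₃` (elements of different factors commute), with `σ` the tensor product of the
canonical involutions (so `σ(uᵢ) = uᵢ`, `σ(vᵢ) = vᵢ`).  Then the 6-dimensional subspace
`V = Fu₁ ⊕ Fv₁ ⊕ Fu₂ ⊕ Fv₂ ⊕ Fu₃ ⊕ Fv₃` consists of `σ`-symmetric elements, `x² ∈ F` for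
all `x ∈ V`, and the quadratic form `q(x) = x²` on `V` is isometric to
`[a₁,b₁] ⊥ [a₂,b₂] ⊥ [a₃,b₃]` (where `[a,b]` is the form `aX² + XY + bY²`). -/
theorem square_form_on_six_dim_space_char_two
    {F A : Type*} [Field F] [Ring A] [Algebra F A]
    (hchar : ringChar F = 2)
    (σ : A →ₗ[F] A)
    (hanti : ∀ x y : A, σ (x * y) = σ y * σ x)
    (hinvol : ∀ x : A, σ (σ x) = x)
    (a b : Fin 3 → F) (ha : ∀ i, a i ≠ 0) (hb : ∀ i, b i ≠ 0)
    (u v : Fin 3 → A)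
    (hu : ∀ i, u i * u i = algebraMap F A (a i))
    (hv : ∀ i, v i * v i = algebraMap F A (b i))
    (huv : ∀ i, u i * v i + v i * u i = 1)
    (hcomm : ∀ i j, i ≠ j →
      Commute (u i) (u j) ∧ Commute (u i) (v j) ∧ Commute (v i) (v j))
    (hσu : ∀ i, σ (u i) = u i) (hσv : ∀ i, σ (v i) = v i)
    (hind : LinearIndependent F ![u 0, v 0, u 1, v 1, u 2, v 2]) :
    (∀ x ∈ Submodule.span F (Set.range ![u 0, v 0, u 1, v 1, u 2, v 2]), σ x = x) ∧
    (∀ x ∈ Submodule.span F (Set.range ![u 0, v 0, u 1, v 1, u 2, v 2]),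
      ∃ c : F, x * x = algebraMap F A c) ∧
    (∃ φ : (Fin 6 → F) ≃ₗ[F] (Submodule.span F (Set.range ![u 0, v 0, u 1, v 1, u 2, v 2])),
      ∀ c : Fin 6 → F,
        ((φ c : A) * (φ c : A)) = algebraMap F A
          (a 0 * c 0 ^ 2 + c 0 * c 1 + b 0 * c 1 ^ 2 +
           (a 1 * c 2 ^ 2 + c 2 * c 3 + b 1 * c 3 ^ 2) +
           (a 2 * c 4 ^ 2 + c 4 * c 5 + b 2 * c 5 ^ 2))) := by
 
  classical
  have h2 : (2 : F) = 0 := by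
    haveI : CharP F 2 := hchar ▸ ringChar.charP F
    exact CharTwo.two_eq_zero
  set w : Fin 6 → A := ![u 0, v 0, u 1, v 1, u 2, v 2] with hw
  -- Part 1: σ fixes the span
  have hσw : ∀ i, σ (w i) = w i := by
    intro i
    fin_cases i
    · exact hσu 0
    · exact hσv 0
    · exact hσu 1
    · exact hσv 1
    · exact hσu 2
    · exact hσv 2
  have part1 : ∀ x ∈ Submodule.span F (Set.range w), σ x = x := by
    intro x hx
    induction hx using Submodule.span_induction with
    | mem y hy => obtain ⟨i, rfl⟩ := hy; exact hσw i
    | zero => simp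
    | add x y _ _ hx' hy' => rw [map_add, hx', hy']
    | smul c x _ hx' => rw [map_smul, hx']
  -- squares of pairs
  have pair_sq : ∀ (i : Fin 3) (c d : F),
      (c • u i + d • v i) * (c • u i + d • v i)
        = algebraMap F A (a i * c ^ 2 + c * d + b i * d ^ 2) := by
    intro i c d
    have e1 : (c • u i + d • v i) * (c • u i + d • v i)
        = (c * c) • (u i * u i) + (c * d) • (u i * v i + v i * u i)
          + (d * d) • (v i * v i) := by
      simp only [add_mul, mul_add, smul_add, mul_smul_comm, smul_mul_assoc, smul_smul]
      module
    rw [e1, hu, hv, huv]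
    simp only [Algebra.smul_def, mul_one, ← map_mul, ← map_add]
    congr 1
    ring
  -- pairs commute
  have hcomm' : ∀ i j : Fin 3, i ≠ j → ∀ (c d c' d' : F),
      Commute (c • u i + d • v i) (c' • u j + d' • v j) := by
    intro i j hij c d c' d'
    obtain ⟨h1, h2', h3⟩ := hcomm i j hij
    obtain ⟨h4, h5, h6⟩ := hcomm j i hij.symm
    exact (((h1.smul_left c).add_left ((h5.symm.smul_left d))).smul_right c').add_right
      (((h2'.smul_left c).add_left (h3.smul_left d)).smul_right d')
  have cross : ∀ i j : Fin 3, i ≠ j → ∀ (c d c' d' : F),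
      (c • u i + d • v i) * (c' • u j + d' • v j)
        + (c' • u j + d' • v j) * (c • u i + d • v i) = 0 := by
    intro i j hij c d c' d'
    rw [← hcomm' i j hij c d c' d']
    have : (c • u i + d • v i) * (c' • u j + d' • v j)
        + (c • u i + d • v i) * (c' • u j + d' • v j)
        = (2 : F) • ((c • u i + d • v i) * (c' • u j + d' • v j)) := by
      rw [show (2:F) = 1 + 1 by norm_num, add_smul, one_smul]
    rw [this, h2, zero_smul]
  -- main square formula
  have hsq : ∀ c : Fin 6 → F,
      (∑ i, c i • w i) * (∑ i, c i • w i)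
        = algebraMap F A
          (a 0 * c 0 ^ 2 + c 0 * c 1 + b 0 * c 1 ^ 2 +
           (a 1 * c 2 ^ 2 + c 2 * c 3 + b 1 * c 3 ^ 2) +
           (a 2 * c 4 ^ 2 + c 4 * c 5 + b 2 * c 5 ^ 2)) := by
    intro c
    have hsum : (∑ i, c i • w i)
        = (c 0 • u 0 + c 1 • v 0) + (c 2 • u 1 + c 3 • v 1) + (c 4 • u 2 + c 5 • v 2) := by
      rw [Fin.sum_univ_six]
      simp only [hw, Matrix.cons_val_zero, Matrix.cons_val_one, Matrix.head_cons,
        Matrix.cons_val_two, Matrix.tail_cons, Matrix.cons_val_three,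
        Matrix.cons_val_four, Matrix.cons_val_fin_one]
      abel
    set P0 : A := c 0 • u 0 + c 1 • v 0
    set P1 : A := c 2 • u 1 + c 3 • v 1
    set P2 : A := c 4 • u 2 + c 5 • v 2
    have expand : (P0 + P1 + P2) * (P0 + P1 + P2)
        = P0 * P0 + P1 * P1 + P2 * P2
          + ((P0 * P1 + P1 * P0) + (P0 * P2 + P2 * P0) + (P1 * P2 + P2 * P1)) := by
      noncomm_ring
    rw [hsum, expand, cross 0 1 (by decide), cross 0 2 (by decide), cross 1 2 (by decide),
      add_zero, add_zero, add_zero, pair_sq, pair_sq, pair_sq, ← map_add, ← map_add]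
  -- the basis of the span
  let B : Basis (Fin 6) F (Submodule.span F (Set.range w)) := Basis.span hind
  have hB : ∀ cc : Fin 6 → F,
      ((B.equivFun.symm cc : Submodule.span F (Set.range w)) : A) = ∑ i, cc i • w i := by
    intro cc
    rw [Basis.equivFun_symm_apply]
    push_cast
    refine Finset.sum_congr rfl fun i _ => ?_
    rw [Basis.span_apply]
  refine ⟨part1, ?_, ⟨B.equivFun.symm, ?_⟩⟩
  · intro x hx
    set x' : Submodule.span F (Set.range w) := ⟨x, hx⟩
    have := hsq (B.equivFun x')
    rw [← hB (B.equivFun x'), LinearEquiv.symm_apply_apply] at this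
    exact ⟨_, this⟩
  · intro cc
    rw [hB cc]
    exact hsq cc
end

section
/- Let L be an étale biquadratic F-algebra (a 4-dimensional commutative étale F-algebra isomorphic to a tensor product of two quadratic étale F-algebras) with Galois group G = {id, γ₁, γ₂, γ₃} ≅ (ℤ/2ℤ)², so that L^G = F and L^{γᵢ} is a quadratic étale F-algebra for each i. If u₁ ∈ L^{γ₁} \ F and u₂ ∈ L^{γ₂} \ F, then γ₁(u₁u₂) + γ₂(u₁u₂) ∉ F. -/
open Module

/-- Let `L` be an étale biquadratic `F`-algebra (`dim_F L = 4`) with Galois group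
`{id, γ₁, γ₂, γ₃} ≅ (ℤ/2)²` (so `γ₁, γ₂` are commuting involutive automorphisms with common
fixed algebra `F`, and étaleness gives that `γ(z) - z` is invertible whenever it is nonzero).
If `u₁ ∈ L^{γ₁} \ F` and `u₂ ∈ L^{γ₂} \ F`, then `γ₁(u₁u₂) + γ₂(u₁u₂) ∉ F`. -/
theorem biquadratic_trace_not_in_base
    {F L : Type*} [Field F] [CommRing L] [Algebra F L] [Nontrivial L]
    (hdim : finrank F L = 4)
    (γ₁ γ₂ : L ≃ₐ[F] L)
    (hγ₁ : ∀ z, γ₁ (γ₁ z) = z) (hγ₂ : ∀ z, γ₂ (γ₂ z) = z)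
    (hγ₁ne : ∃ z, γ₁ z ≠ z) (hγ₂ne : ∃ z, γ₂ z ≠ z) (hγne : γ₁ ≠ γ₂)
    (hcomm : ∀ z, γ₁ (γ₂ z) = γ₂ (γ₁ z))
    (hfix : ∀ z : L, γ₁ z = z → γ₂ z = z → z ∈ Set.range (algebraMap F L))
    (hinv₁ : ∀ z : L, γ₁ z ≠ z → IsUnit (γ₁ z - z))
    (hinv₂ : ∀ z : L, γ₂ z ≠ z → IsUnit (γ₂ z - z))
    (u₁ u₂ : L)
    (hu₁ : γ₁ u₁ = u₁) (hu₁' : u₁ ∉ Set.range (algebraMap F L))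
    (hu₂ : γ₂ u₂ = u₂) (hu₂' : u₂ ∉ Set.range (algebraMap F L)) :
    γ₁ (u₁ * u₂) + γ₂ (u₁ * u₂) ∉ Set.range (algebraMap F L) := by
  rintro ⟨c, hc⟩
  -- s is fixed by γ₁
  have hs : γ₁ (γ₁ (u₁ * u₂) + γ₂ (u₁ * u₂)) = γ₁ (u₁ * u₂) + γ₂ (u₁ * u₂) := by
    rw [← hc, AlgEquiv.commutes]
  have key : (u₁ - γ₂ u₁) * (u₂ - γ₁ u₂) = 0 := by
    have h1 : γ₁ (γ₁ (u₁ * u₂)) = u₁ * u₂ := hγ₁ _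
    have h2 : γ₁ (γ₂ (u₁ * u₂)) = γ₂ u₁ * γ₁ u₂ := by
      rw [hcomm, map_mul, hu₁, map_mul, ← hcomm, hu₂]
    rw [map_add, h1, h2, map_mul, map_mul, hu₁, hu₂] at hs
    linear_combination hs
  have h2 : γ₂ u₁ ≠ u₁ := fun h => hu₁' (hfix u₁ hu₁ h)
  have h3 : γ₁ u₂ ≠ u₂ := fun h => hu₂' (hfix u₂ h hu₂)
  have hunit : IsUnit ((γ₂ u₁ - u₁) * (γ₁ u₂ - u₂)) := (hinv₂ u₁ h2).mul (hinv₁ u₂ h3)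
  exact hunit.ne_zero (by linear_combination key)
end

section
/- Let A be an F-algebra with involution σ, L an étale biquadratic F-subalgebra of A contained in Symm(σ) with Galois group {id, γ₁, γ₂, γ₃}. For i = 1,2,3 set Wᵢ = {x ∈ Symd(σ) : yx = x·γᵢ(y) for all y ∈ L}. Then for x ∈ W₁ and y ∈ W₂, the element x*y = xy + yx lies in W₃. -/
open Module

/-- Let `(A, σ)` be an `F`-algebra with involution, `L ⊆ Symm(σ)` an étale
biquadratic `F`-subalgebra with Galois group `{id, γ₁, γ₂, γ₃}` (`γ₃ = γ₁γ₂ = γ₂γ₁`).  For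
`Wᵢ = {x ∈ Symd(σ) : yx = x·γᵢ(y) for all y ∈ L}`, if `x ∈ W₁` and `y ∈ W₂` then
`x*y := xy + yx` lies in `W₃`. -/
theorem jordan_product_mem_W3
    {F A : Type*} [Field F] [Ring A] [Algebra F A]
    (σ : A →ₗ[F] A)
    (hanti : ∀ x y : A, σ (x * y) = σ y * σ x)
    (hinvol : ∀ x : A, σ (σ x) = x)
    (L : Subalgebra F A) (hdim : finrank F L = 4)
    (hLsym : ∀ l : L, σ l = l)
    (γ₁ γ₂ γ₃ : L ≃ₐ[F] L)
    (hγ₃ : ∀ l, γ₃ l = γ₁ (γ₂ l))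
    (hcomm : ∀ l, γ₁ (γ₂ l) = γ₂ (γ₁ l))
    (x y : A)
    (hx1 : ∃ a : A, x = a + σ a)
    (hx2 : ∀ l : L, (l : A) * x = x * (γ₁ l : A))
    (hy1 : ∃ a : A, y = a + σ a)
    (hy2 : ∀ l : L, (l : A) * y = y * (γ₂ l : A)) :
    (∃ a : A, x * y + y * x = a + σ a) ∧
    (∀ l : L, (l : A) * (x * y + y * x) = (x * y + y * x) * (γ₃ l : A)) := by
  have hσx : σ x = x := by
    obtain ⟨a, ha⟩ := hx1
    rw [ha, map_add, hinvol, add_comm]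
  have hσy : σ y = y := by
    obtain ⟨a, ha⟩ := hy1
    rw [ha, map_add, hinvol, add_comm]
  constructor
  · exact ⟨x * y, by rw [hanti, hσx, hσy]⟩
  · intro l
    have h1 : (l : A) * (x * y) = (x * y) * (γ₃ l : A) := by
      rw [← mul_assoc, hx2 l, mul_assoc, hy2 (γ₁ l), ← mul_assoc, hγ₃, hcomm]
    have h2 : (l : A) * (y * x) = (y * x) * (γ₃ l : A) := by
      rw [← mul_assoc, hy2 l, mul_assoc, hx2 (γ₂ l), ← mul_assoc, hγ₃]
    rw [mul_add, add_mul, h1, h2]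
end

section
/- Let A be an F-algebra with involution σ, and L an étale biquadratic F-subalgebra of A contained in Symm(σ) with Galois group {id, γ₁, γ₂, γ₃}. For x ∈ W₁ = {x ∈ Symd(σ) : yx = xγ₁(y) for all y ∈ L} and y ∈ W₂ = {x ∈ Symd(σ) : yx = xγ₂(y) for all y ∈ L}, assume that squares of elements of Wᵢ lie in L^{γᵢ}. Then the element z = xyxy + yxyx satisfies γ₁(z) = z, and hence z ∈ L^{γ₁} ∩ L^{γ₃} = F whenever z ∈ L^{γ₃}. -/
open Module

/-- With `L ⊆ Symm(σ)` an étale biquadratic subalgebra with Galois group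
`{id, γ₁, γ₂, γ₃}` (`γ₃ = γ₁γ₂`, the `γᵢ` involutive and commuting; in a quadratic étale
algebra with nontrivial automorphism `ι`, nonzero elements `ι(z) - z` are invertible), let
`x ∈ W₁` and `y ∈ W₂` with squares of elements of `Wᵢ` lying in `L^{γᵢ}`.  Then
`z = xyxy + yxyx` satisfies `γ₁(z) = z`, hence `z ∈ L^{γ₁} ∩ L^{γ₃} = F` whenever
`z ∈ L^{γ₃}`. -/
theorem xyxy_add_yxyx_fixed_by_gamma1
    {F A : Type*} [Field F] [Ring A] [Algebra F A]
    (σ : A →ₗ[F] A)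
    (hanti : ∀ x y : A, σ (x * y) = σ y * σ x)
    (hinvol : ∀ x : A, σ (σ x) = x)
    (L : Subalgebra F A)
    (hLsym : ∀ l : L, σ l = l)
    (γ₁ γ₂ γ₃ : L ≃ₐ[F] L)
    (hγ₃ : ∀ l, γ₃ l = γ₁ (γ₂ l))
    (hcomm : ∀ l, γ₁ (γ₂ l) = γ₂ (γ₁ l))
    (hγ₁2 : ∀ l, γ₁ (γ₁ l) = l) (hγ₂2 : ∀ l, γ₂ (γ₂ l) = l)
    (hinv : ∀ l : L, γ₁ l ≠ l → IsUnit (γ₁ l - l))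
    (hfix : ∀ l : L, γ₁ l = l → γ₃ l = l → ∃ c : F, l = algebraMap F L c)
    (x y : A)
    (hx1 : ∃ a : A, x = a + σ a)
    (hx2 : ∀ l : L, (l : A) * x = x * (γ₁ l : A))
    (hy1 : ∃ a : A, y = a + σ a)
    (hy2 : ∀ l : L, (l : A) * y = y * (γ₂ l : A))
    (hxsq : ∃ l : L, (l : A) = x * x ∧ γ₁ l = l)
    (hysq : ∃ l : L, (l : A) = y * y ∧ γ₂ l = l) :
    ∀ w : L, (w : A) = x * y * x * y + y * x * y * x →
      γ₁ w = w ∧ (γ₃ w = w → ∃ c : F, w = algebraMap F L c) := by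
  obtain ⟨l, hl, hlγ⟩ := hxsq
  intro w hw
  -- l commutes with y*x*y
  have h2 : (l : A) * (y * x * y) = (y * x * y) * (l : A) := by
    have e4 : γ₂ (γ₁ (γ₂ l)) = l := by rw [← hcomm, hγ₂2, hlγ]
    calc (l : A) * (y * x * y)
        = ((l : A) * y) * x * y := by noncomm_ring
      _ = (y * (γ₂ l : A)) * x * y := by rw [hy2 l]
      _ = y * (((γ₂ l : A)) * x) * y := by noncomm_ring
      _ = y * (x * (γ₁ (γ₂ l) : A)) * y := by rw [hx2 (γ₂ l)]
      _ = (y * x) * ((γ₁ (γ₂ l) : A) * y) := by noncomm_ring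
      _ = (y * x) * (y * (γ₂ (γ₁ (γ₂ l)) : A)) := by rw [hy2 (γ₁ (γ₂ l))]
      _ = (y * x * y) * (γ₂ (γ₁ (γ₂ l)) : A) := by noncomm_ring
      _ = (y * x * y) * (l : A) := by rw [e4]
  -- w commutes with x
  have h3 : (w : A) * x = x * (w : A) := by
    rw [hw]
    have : x * (x * y * x * y + y * x * y * x)
        = (l : A) * (y * x * y) + x * y * x * y * x := by
      rw [hl]; simp only [mul_add, mul_assoc]
    rw [this, h2]
    rw [hl]; simp only [mul_add, add_mul, mul_assoc]; rw [add_comm]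
  have key : x * ((γ₁ w : A) - (w : A)) = 0 := by
    have h1 : (w : A) * x = x * (γ₁ w : A) := hx2 w
    rw [mul_sub, ← h1, h3, sub_self]
  have hg1 : γ₁ w = w := by
    by_contra h
    obtain ⟨u, hu⟩ := hinv w h
    have hx0 : x = 0 := by
      have h5 : x * ((u : L) : A) = 0 := by
        rw [hu]; push_cast at key ⊢
        convert key using 2
      have h6 : ((u : L) : A) * (((u⁻¹ : Lˣ) : L) : A) = 1 := by
        have : ((u : L) * ((u⁻¹ : Lˣ) : L) : L) = 1 := by exact_mod_cast u.mul_inv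
        calc ((u : L) : A) * (((u⁻¹ : Lˣ) : L) : A)
            = (((u : L) * ((u⁻¹ : Lˣ) : L) : L) : A) := by push_cast; rfl
          _ = 1 := by rw [this]; rfl
      calc x = x * (((u : L) : A) * (((u⁻¹ : Lˣ) : L) : A)) := by rw [h6, mul_one]
        _ = (x * ((u : L) : A)) * (((u⁻¹ : Lˣ) : L) : A) := by noncomm_ring
        _ = 0 := by rw [h5, zero_mul]
    have hw0 : w = 0 := by
      apply Subtype.ext
      rw [hw, hx0]
      simp
    exact h (by rw [hw0, map_zero])
  exact ⟨hg1, fun h3' => hfix w hg1 h3'⟩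
end

section
/- Let A be an F-algebra with involution σ of capacity 4, L a neat biquadratic F-subalgebra of (A,σ) with Galois group {id, γ₁, γ₂, γ₃}, and Wᵢ = {x ∈ Symd(σ) : yx = xγᵢ(y) for all y ∈ L}. Suppose a ∈ L^{γ₁} \ F has trace 1 in L^{γ₁}/F (so γ₂(a) = γ₃(a) = 1 - a and (2a-1)² ∈ F×). Then for x ∈ L + W₁ one has ax + xa = 2ax, and for x ∈ W₂ + W₃ one has ax + xa = x; consequently (L + W₁) ∩ (W₂ + W₃) = 0. -/
open Module

/-- The space `Wᵢ = {x ∈ Symd(σ) : yx = x·γ(y) for all y ∈ L}`. -/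
def Wset {F A : Type*} [Field F] [Ring A] [Algebra F A]
    (σ : A →ₗ[F] A) (L : Subalgebra F A) (γ : L ≃ₐ[F] L) : Set A :=
  {x | (∃ a : A, x = a + σ a) ∧ ∀ l : L, (l : A) * x = x * (γ l : A)}

/-- Let `(A,σ)` be an `F`-algebra with involution, `L ⊆ Symm(σ)` an étale
biquadratic (commutative, 4-dimensional) subalgebra with Galois automorphisms `γ₁, γ₂, γ₃`,
and `Wᵢ` as above.  Suppose `a ∈ L^{γ₁} \ F` has trace `1` in `L^{γ₁}/F`, so
`γ₂(a) = γ₃(a) = 1 - a` and `2a - 1` is invertible in `L`.  Then for `x ∈ L + W₁` one has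
`ax + xa = 2ax`, for `x ∈ W₂ + W₃` one has `ax + xa = x`, and consequently
`(L + W₁) ∩ (W₂ + W₃) = 0`. -/
theorem L_add_W1_inter_W2_add_W3_eq_bot
    {F A : Type*} [Field F] [Ring A] [Algebra F A]
    (σ : A →ₗ[F] A)
    (hanti : ∀ x y : A, σ (x * y) = σ y * σ x)
    (hinvol : ∀ x : A, σ (σ x) = x)
    (L : Subalgebra F A) (hdim : finrank F L = 4)
    (hLsym : ∀ l : L, σ l = l)
    (hLcomm : ∀ p q : L, p * q = q * p)
    (γ₁ γ₂ γ₃ : L ≃ₐ[F] L)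
    (a : L)
    (ha1 : γ₁ a = a)
    (haF : a ∉ Set.range (algebraMap F L))
    (ha2 : γ₂ a = 1 - a) (ha3 : γ₃ a = 1 - a)
    (hsq : ∃ c : F, c ≠ 0 ∧ ((2 * a - 1) * (2 * a - 1) : L) = algebraMap F L c)
    (hunit : IsUnit (2 * a - 1 : L)) :
    (∀ x ∈ Submodule.span F ((L : Set A) ∪ Wset σ L γ₁),
      (a : A) * x + x * (a : A) = 2 * ((a : A) * x)) ∧
    (∀ x ∈ Submodule.span F (Wset σ L γ₂ ∪ Wset σ L γ₃),
      (a : A) * x + x * (a : A) = x) ∧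
    Submodule.span F ((L : Set A) ∪ Wset σ L γ₁) ⊓
      Submodule.span F (Wset σ L γ₂ ∪ Wset σ L γ₃) = ⊥ := by
  have h1 : ∀ x ∈ Submodule.span F ((L : Set A) ∪ Wset σ L γ₁),
      (a : A) * x = x * (a : A) := by
    intro x hx
    induction hx using Submodule.span_induction with
    | mem y hy =>
      rcases hy with hy | hy
      · lift y to L using hy with l
        have := hLcomm a l
        exact_mod_cast congrArg (Subtype.val) this
      · have := hy.2 a
        rwa [ha1] at this
    | zero => simp
    | add x y hx hy ihx ihy => rw [mul_add, add_mul, ihx, ihy]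
    | smul c x hx ih => rw [mul_smul_comm, smul_mul_assoc, ih]
  have h2 : ∀ x ∈ Submodule.span F (Wset σ L γ₂ ∪ Wset σ L γ₃),
      (a : A) * x + x * (a : A) = x := by
    intro x hx
    induction hx using Submodule.span_induction with
    | mem y hy =>
      rcases hy with hy | hy
      · have := hy.2 a
        rw [ha2] at this
        push_cast at this
        rw [this]; noncomm_ring
      · have := hy.2 a
        rw [ha3] at this
        push_cast at this
        rw [this]; noncomm_ring
    | zero => simp
    | add x y hx hy ihx ihy =>
      rw [mul_add, add_mul]
      calc (a:A)*x + (a:A)*y + (x*a + y*a)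
          = ((a:A)*x + x*a) + ((a:A)*y + y*a) := by abel
        _ = x + y := by rw [ihx, ihy]
    | smul c x hx ih =>
      rw [mul_smul_comm, smul_mul_assoc, ← smul_add, ih]
  refine ⟨fun x hx => by rw [h1 x hx]; noncomm_ring, h2, ?_⟩
  rw [eq_bot_iff]
  intro x hx
  simp only [Submodule.mem_inf] at hx
  have hcomm := h1 x hx.1
  have hsum := h2 x hx.2
  rw [← hcomm] at hsum
  have hkey : ((2 * a - 1 : L) : A) * x = 0 := by
    push_cast
    calc (2 * (a:A) - 1) * x = ((a:A)*x + (a:A)*x) - x := by noncomm_ring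
      _ = 0 := by rw [hsum]; simp
  obtain ⟨u, hu⟩ := hunit
  have hL : ((u⁻¹ : Lˣ) : L) * (2 * a - 1) = 1 := by rw [← hu]; exact u.inv_mul
  have hinv : (((u⁻¹ : Lˣ) : L) : A) * ((2 * a - 1 : L) : A) = 1 := by
    exact_mod_cast congrArg Subtype.val hL
  have : x = 0 := by
    calc x = ((((u⁻¹ : Lˣ) : L) : A) * ((2 * a - 1 : L) : A)) * x := by rw [hinv, one_mul]
      _ = (((u⁻¹ : Lˣ) : L) : A) * (((2 * a - 1 : L) : A) * x) := by rw [mul_assoc]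
      _ = 0 := by rw [hkey, mul_zero]
  simp [this]
end

section
/- In the setting of the previous decomposition (σ hyperbolic with idempotent e = v + w, v ∈ C, w ∈ C', σ(v) = 1 - v, σ(w) = -w, v² + w² = v, wv = σ(v)w), assume additionally that σ restricted to C is anisotropic (σ(x)x = 0 implies x = 0 for x ∈ C) and C is finite-dimensional over F. Then v is invertible in C, and for a right inverse v' of v, the element wv' satisfies σ(wv') = -wv' and (wv')² = 1. -/
open Module

/-- The centralizer `C = C_A(K) = {x : kx = xk for all k ∈ K}`. -/
def centSet {F A : Type*} [Field F] [Ring A] [Algebra F A] (K : Subalgebra F A) : Set A :=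
  {x | ∀ k : K, (k : A) * x = x * (k : A)}

/-- The twisted centralizer `C' = {x : xk = γ(k)x for all k ∈ K}`. -/
def twistSet {F A : Type*} [Field F] [Ring A] [Algebra F A]
    (K : Subalgebra F A) (γ : K ≃ₐ[F] K) : Set A :=
  {x | ∀ k : K, x * (k : A) = (γ k : A) * x}

/-- In the setting of the decomposition coming from a hyperbolic idempotent
`e = v + w` (`v ∈ C = C_A(K)`, `w ∈ C'`, `σ(v) = 1 - v`, `σ(w) = -w`, `v² + w² = v`,
`vw + wv = w`, `wv = σ(v)w`), if moreover `σ|_C` is anisotropic and `A` is finite-dimensional,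
then `v` is invertible in `C`, and for any right inverse `v' ∈ C` of `v` the element `wv'`
satisfies `σ(wv') = -wv'` and `(wv')² = 1`. -/
theorem wv_inverse_square_one
    {F A : Type*} [Field F] [Ring A] [Algebra F A] [FiniteDimensional F A]
    (σ : A →ₗ[F] A)
    (hanti : ∀ x y : A, σ (x * y) = σ y * σ x)
    (hinvol : ∀ x : A, σ (σ x) = x)
    (K : Subalgebra F A) (hK2 : finrank F K = 2)
    (hKsym : ∀ k : K, σ k = k)
    (γ : K ≃ₐ[F] K) (hγ2 : ∀ k, γ (γ k) = k) (hγne : ∃ k, γ k ≠ k)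
    (hσC : ∀ x ∈ centSet K, σ x ∈ centSet K)
    (hσC' : ∀ x ∈ twistSet K γ, σ x ∈ twistSet K γ)
    (haniso : ∀ x ∈ centSet K, σ x * x = 0 → x = 0)
    (v w : A)
    (hv : v ∈ centSet K) (hw : w ∈ twistSet K γ)
    (hσv : σ v = 1 - v) (hσw : σ w = -w)
    (hvw1 : v * v + w * w = v) (hvw2 : v * w + w * v = w)
    (hwv : w * v = σ v * w) :
    (∃ v' ∈ centSet K, v * v' = 1 ∧ v' * v = 1) ∧
    (∀ v' ∈ centSet K, v * v' = 1 →
      σ (w * v') = -(w * v') ∧ (w * v') * (w * v') = 1) := by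

  -- membership helpers for centSet
  have hCmem : ∀ {x : A}, x ∈ centSet K ↔ ∀ k : K, (k : A) * x = x * (k : A) := by
    intro x; rfl
  have hC1 : (1 : A) ∈ centSet K := by
    intro k; rw [mul_one, one_mul]
  have hCmul : ∀ {x y : A}, x ∈ centSet K → y ∈ centSet K → x * y ∈ centSet K := by
    intro x y hx hy k
    rw [← mul_assoc, hx k, mul_assoc, hy k, ← mul_assoc]
  have hCsub : ∀ {x y : A}, x ∈ centSet K → y ∈ centSet K → x - y ∈ centSet K := by
    intro x y hx hy k
    rw [mul_sub, hx k, hy k, sub_mul]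
  -- σ 1 = 1
  have hσ1 : σ (1 : A) = 1 := by
    have h := hanti (σ 1) 1
    rw [mul_one, hinvol, mul_one] at h
    exact h.symm
  -- key injectivity fact: for x ∈ C, v x = 0 implies x = 0
  have key : ∀ x ∈ centSet K, v * x = 0 → x = 0 := by
    intro x hx hvx
    have hsx : σ x ∈ centSet K := hσC x hx
    have hsxv : σ x * v = σ x := by
      have h := hanti v x
      rw [hvx, map_zero, hσv, mul_sub, mul_one] at h
      exact (sub_eq_zero.mp h.symm).symm
    have ht : x * σ x ∈ centSet K := hCmul hx hsx
    have htv : (x * σ x) * v = x * σ x := by rw [mul_assoc, hsxv]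
    have hvt : v * (x * σ x) = 0 := by rw [← mul_assoc, hvx, zero_mul]
    have ht2 : (x * σ x) * (x * σ x) = 0 := by
      have h : (x * σ x) * (x * σ x) = ((x * σ x) * v) * (x * σ x) := by rw [htv]
      rw [h, mul_assoc, hvt, mul_zero]
    have hσt : σ (x * σ x) = x * σ x := by rw [hanti, hinvol]
    have ht0 : x * σ x = 0 := haniso _ ht (by rw [hσt]; exact ht2)
    have hsx0 : σ x = 0 := haniso _ hsx (by rw [hinvol]; exact ht0)
    have := hinvol x
    rw [hsx0, map_zero] at this
    exact this.symm
  -- the centralizer as a submodule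
  let M : Submodule F A :=
    { carrier := centSet K
      add_mem' := fun {a b} ha hb k => by rw [mul_add, ha k, hb k, add_mul]
      zero_mem' := fun k => by rw [mul_zero, zero_mul]
      smul_mem' := fun c x hx k => by rw [mul_smul_comm, hx k, smul_mul_assoc] }
  let L : M →ₗ[F] M :=
    { toFun := fun x => ⟨v * x.1, hCmul hv x.2⟩
      map_add' := fun x y => Subtype.ext (mul_add _ _ _)
      map_smul' := fun c x => Subtype.ext (mul_smul_comm _ _ _) }
  have hLinj : Function.Injective L := by
    intro a b hab
    have h1 : v * a.1 = v * b.1 := congrArg Subtype.val hab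
    have h0 : v * (a.1 - b.1) = 0 := by rw [mul_sub, h1, sub_self]
    have := key _ (hCsub a.2 b.2) h0
    exact Subtype.ext (sub_eq_zero.mp this)
  have hLsurj : Function.Surjective L :=
    (LinearMap.injective_iff_surjective (f := L)).mp hLinj
  obtain ⟨x, hx1⟩ := hLsurj ⟨1, hC1⟩
  have hvx1 : v * x.1 = 1 := congrArg Subtype.val hx1
  -- left inverse
  have hleft : ∀ y ∈ centSet K, v * y = 1 → y * v = 1 := by
    intro y hy hvy
    have h0 : v * (y * v - 1) = 0 := by
      rw [mul_sub, ← mul_assoc, hvy, one_mul, mul_one, sub_self]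
    have := key _ (hCsub (hCmul hy hv) hC1) h0
    exact sub_eq_zero.mp this
  constructor
  · exact ⟨x.1, x.2, hvx1, hleft x.1 x.2 hvx1⟩
  · intro v' hv' hvv'
    have hv'v : v' * v = 1 := hleft v' hv' hvv'
    set s := σ v' with hs
    have hs2 : s * (1 - v) = 1 := by
      have h := hanti v v'
      rw [hvv', hσ1, hσv] at h
      exact h.symm
    have hs1 : (1 - v) * s = 1 := by
      have h := hanti v' v
      rw [hv'v, hσ1, hσv] at h
      exact h.symm
    have hwv' : w * v = (1 - v) * w := by rw [hwv, hσv]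
    have hw1 : w = (1 - v) * (w * v') := by
      calc w = w * (v * v') := by rw [hvv', mul_one]
        _ = (w * v) * v' := by rw [mul_assoc]
        _ = ((1 - v) * w) * v' := by rw [hwv']
        _ = (1 - v) * (w * v') := by rw [mul_assoc]
    have hsw : s * w = w * v' := by
      calc s * w = s * ((1 - v) * (w * v')) := by rw [← hw1]
        _ = (s * (1 - v)) * (w * v') := by rw [mul_assoc]
        _ = w * v' := by rw [hs2, one_mul]
    have hvw' : w * (1 - v) = v * w := by
      rw [mul_sub, mul_one, hwv', sub_mul, one_mul, sub_sub_cancel]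
    have hws : w * s = v' * w := by
      have hw2 : v * (w * s) = w := by
        calc v * (w * s) = (v * w) * s := by rw [mul_assoc]
          _ = (w * (1 - v)) * s := by rw [hvw']
          _ = w * ((1 - v) * s) := by rw [mul_assoc]
          _ = w := by rw [hs1, mul_one]
      calc w * s = 1 * (w * s) := by rw [one_mul]
        _ = (v' * v) * (w * s) := by rw [hv'v]
        _ = v' * (v * (w * s)) := by rw [mul_assoc]
        _ = v' * w := by rw [hw2]
    constructor
    · rw [hanti, hσw, ← hs, mul_neg, hsw]
    · have hww : w * w = v - v * v := by linear_combination (norm := noncomm_ring) hvw1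
      calc (w * v') * (w * v') = (s * w) * (s * w) := by rw [hsw]
        _ = s * ((w * s) * w) := by rw [mul_assoc, mul_assoc]
        _ = s * ((v' * w) * w) := by rw [hws]
        _ = s * (v' * (w * w)) := by rw [mul_assoc]
        _ = s * (v' * (v - v * v)) := by rw [hww]
        _ = s * (1 - v) := by
            congr 1
            rw [mul_sub, ← mul_assoc, hv'v, one_mul]
        _ = 1 := hs2
end

section
/- Let F be a field, s : K → F an F-linear form on a quadratic étale F-algebra K with kernel exactly F, and let λ ∈ K×. Then the transfer s_*(⟨λ⟩) of the rank-1 quadratic form ⟨λ⟩ over K (the binary quadratic form x ↦ s(λx²) on K viewed as F-vector space) is similar to the binary form ⟨1, -N_{K/F}(λ)⟩ over F, provided char F ≠ 2. -/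
/-!
Pick `α` with `s α = 1`; then `(1, α)` is a basis of `K` and in these coordinates
`s (λ (x + y α)²) = s(λ) x² + 2 s(λα) x y + s(λα²) y²`. Reading the multiplication matrix of `λ`
in this basis shows that the discriminant `s(λα)² - s(λ) s(λα²)` of this form is `N(λ)`, which is
nonzero since `λ` is a unit. Finally, a binary form `b x² + 2 e x y + f y²` with `d = e² - b f ≠ 0`
is similar to `⟨1, -d⟩` when `2 ≠ 0`: complete the square if `b ≠ 0`; if `b = 0` it factors as
`y (2 e x + f y)` and is hyperbolic, like `⟨1, -e²⟩`.
-/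

open Module

theorem Matrix.exists_linearEquiv_mulVec {F n : Type*} [Field F] [Fintype n] [DecidableEq n]
    (m : Matrix n n F) (hm : m.det ≠ 0) :
    ∃ M : (n → F) ≃ₗ[F] (n → F), ∀ p, M p = m.mulVec p :=
  ⟨m.toLinearEquiv' (m.invertibleOfIsUnitDet hm.isUnit), fun _ => rfl⟩

section BinaryForm

variable {F : Type*} [Field F]

theorem exists_linearEquiv_binary_form_eq_of_ne_zero {b : F} (hb : b ≠ 0) (e f : F) :
    ∃ M : (Fin 2 → F) ≃ₗ[F] (Fin 2 → F), ∀ p,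
      b * M p 0 ^ 2 + 2 * e * (M p 0 * M p 1) + f * M p 1 ^ 2 =
        b * (p 0 ^ 2 - (e ^ 2 - b * f) * p 1 ^ 2) := by
  -- `b (b x² + 2 e x y + f y²) = (b x + e y)² - (e² - b f) y²`, with `b x + e y = b p₀`, `y = b p₁`.
  obtain ⟨M, hM⟩ := Matrix.exists_linearEquiv_mulVec !![1, -e; 0, b]
    (by simpa [Matrix.det_fin_two_of] using hb)
  refine ⟨M, fun p => ?_⟩
  simp only [hM, Matrix.mulVec, dotProduct, Fin.sum_univ_two, Matrix.of_apply, Matrix.cons_val',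
    Matrix.cons_val_zero, Matrix.cons_val_one, Matrix.empty_val', Matrix.cons_val_fin_one]
  ring

theorem exists_linearEquiv_binary_form_eq_of_isotropic (h2 : (2 : F) ≠ 0) {e : F}
    (he : e ≠ 0) (f : F) :
    ∃ M : (Fin 2 → F) ≃ₗ[F] (Fin 2 → F), ∀ p,
      2 * e * (M p 0 * M p 1) + f * M p 1 ^ 2 = (2 * e) ^ 2 * (p 0 ^ 2 - e ^ 2 * p 1 ^ 2) := by
  -- The form is `y (2 e x + f y)`, and here `y = 2 e (p₀ - e p₁)`, `2 e x + f y = 2 e (p₀ + e p₁)`.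
  obtain ⟨M, hM⟩ := Matrix.exists_linearEquiv_mulVec !![1 - f, e * (1 + f); 2 * e, -2 * e ^ 2]
    (by rw [Matrix.det_fin_two_of]
        convert neg_ne_zero.2 (pow_ne_zero 2 (mul_ne_zero h2 he)) using 1; ring)
  refine ⟨M, fun p => ?_⟩
  simp only [hM, Matrix.mulVec, dotProduct, Fin.sum_univ_two, Matrix.of_apply, Matrix.cons_val',
    Matrix.cons_val_zero, Matrix.cons_val_one, Matrix.empty_val', Matrix.cons_val_fin_one]
  ring

theorem exists_linearEquiv_binary_form_similar (h2 : (2 : F) ≠ 0) {b e f : F}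
    (hd : e ^ 2 - b * f ≠ 0) :
    ∃ c ≠ 0, ∃ M : (Fin 2 → F) ≃ₗ[F] (Fin 2 → F), ∀ p,
      b * M p 0 ^ 2 + 2 * e * (M p 0 * M p 1) + f * M p 1 ^ 2 =
        c * (p 0 ^ 2 - (e ^ 2 - b * f) * p 1 ^ 2) := by
  rcases eq_or_ne b 0 with rfl | hb
  · have he : e ≠ 0 := by simpa using hd
    obtain ⟨M, hM⟩ := exists_linearEquiv_binary_form_eq_of_isotropic h2 he f
    exact ⟨(2 * e) ^ 2, pow_ne_zero 2 (mul_ne_zero h2 he), M, fun p => by simpa using hM p⟩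
  · exact ⟨b, hb, exists_linearEquiv_binary_form_eq_of_ne_zero hb e f⟩

end BinaryForm

section KernelSpanOne

variable {F K : Type*} [Field F] [CommRing K] [Algebra F K]

theorem LinearMap.apply_mul_sq_smul_add_smul (s : K →ₗ[F] F) (lam w z : K) (x y : F) :
    s (lam * ((x • w + y • z) * (x • w + y • z))) =
      s (lam * (w * w)) * x ^ 2 + 2 * s (lam * (w * z)) * (x * y) + s (lam * (z * z)) * y ^ 2 := by
  have hexp : lam * ((x • w + y • z) * (x • w + y • z)) =
      x ^ 2 • (lam * (w * w)) + (2 * (x * y)) • (lam * (w * z)) + y ^ 2 • (lam * (z * z)) := by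
    simp only [Algebra.smul_def, map_mul, map_pow, map_ofNat]
    ring
  simp only [hexp, map_add, map_smul, smul_eq_mul]
  ring

variable {s : K →ₗ[F] F} (hker : LinearMap.ker s = Submodule.span F {1})
include hker

theorem LinearMap.exists_apply_eq_one_of_ker_eq_span_one (hdim : finrank F K = 2) :
    ∃ α, s α = 1 := by
  have : Nontrivial K := Module.nontrivial_of_finrank_pos (R := F) (by omega)
  have hs : s ≠ 0 := by
    rintro rfl
    have := finrank_span_singleton (K := F) (one_ne_zero (α := K))
    rw [← hker, LinearMap.ker_zero, finrank_top] at this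
    omega
  exact LinearMap.surjective_of_ne_zero hs 1

theorem LinearMap.apply_one_of_ker_eq_span_one : s 1 = 0 :=
  (hker ▸ Submodule.mem_span_singleton_self 1 : (1 : K) ∈ LinearMap.ker s)

variable {α : K} (hα : s α = 1)
include hα

theorem LinearMap.exists_eq_smul_one_add_smul_of_ker_eq_span_one (w : K) :
    ∃ t : F, w = t • 1 + s w • α := by
  have : w - s w • α ∈ LinearMap.ker s := by simp [hα]
  rw [hker, Submodule.mem_span_singleton] at this
  obtain ⟨t, ht⟩ := this
  exact ⟨t, by rw [ht, sub_add_cancel]⟩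

theorem LinearMap.linearIndependent_one_of_ker_eq_span_one : LinearIndependent F ![1, α] := by
  have hs1 := LinearMap.apply_one_of_ker_eq_span_one hker
  have : Nontrivial K := nontrivial_of_ne α 0 fun h => by simp [h] at hα
  rw [linearIndependent_fin2]
  refine ⟨fun h => by simp_all, fun t ht => ?_⟩
  have ht0 : t = 0 := by simpa [hα, hs1] using congrArg s ht
  simp [ht0] at ht

noncomputable def LinearMap.basisOneOfKerEqSpanOne : Basis (Fin 2) F K :=
  .mk (v := ![1, α]) (LinearMap.linearIndependent_one_of_ker_eq_span_one hker hα) fun w _ => by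
    obtain ⟨t, ht⟩ := LinearMap.exists_eq_smul_one_add_smul_of_ker_eq_span_one hker hα w
    rw [ht]
    exact Submodule.add_mem _ (Submodule.smul_mem _ _ (Submodule.subset_span ⟨0, rfl⟩))
      (Submodule.smul_mem _ _ (Submodule.subset_span ⟨1, rfl⟩))

theorem LinearMap.coe_basisOneOfKerEqSpanOne :
    ⇑(LinearMap.basisOneOfKerEqSpanOne hker hα) = ![1, α] :=
  Basis.coe_mk _ _

theorem LinearMap.basisOneOfKerEqSpanOne_repr_smul_one_add_smul (x y : F) :
    (LinearMap.basisOneOfKerEqSpanOne hker hα).repr (x • 1 + y • α) =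
      Finsupp.single 0 x + Finsupp.single 1 y := by
  have hB := LinearMap.coe_basisOneOfKerEqSpanOne hker hα
  set B := LinearMap.basisOneOfKerEqSpanOne hker hα
  have h0 : (1 : K) = B 0 := by simp [hB]
  have h1 : α = B 1 := by simp [hB]
  rw [h0, h1]
  simp

theorem LinearMap.algebraNorm_eq_of_ker_eq_span_one (lam : K) :
    Algebra.norm F lam = s (lam * α) ^ 2 - s lam * s (lam * (α * α)) := by
  set B := LinearMap.basisOneOfKerEqSpanOne hker hα
  obtain ⟨a, ha⟩ := LinearMap.exists_eq_smul_one_add_smul_of_ker_eq_span_one hker hα lam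
  obtain ⟨c, hc⟩ := LinearMap.exists_eq_smul_one_add_smul_of_ker_eq_span_one hker hα (lam * α)
  have hlamα : s (lam * α) = a + s lam * s (α * α) := by
    conv_lhs => rw [ha]
    simp [add_mul, hα]
  have hlamαα : s (lam * (α * α)) = c + s (lam * α) * s (α * α) := by
    conv_lhs => rw [← mul_assoc, hc]
    simp [add_mul, hα]
  have hrepr {w : K} {t : F} (hw : w = t • 1 + s w • α) :
      B.repr w = Finsupp.single 0 t + Finsupp.single 1 (s w) :=
    (congrArg B.repr hw).trans (LinearMap.basisOneOfKerEqSpanOne_repr_smul_one_add_smul hker hα _ _)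
  rw [Algebra.norm_eq_matrix_det B, Matrix.det_fin_two]
  simp only [Algebra.leftMulMatrix_eq_repr_mul, B, LinearMap.coe_basisOneOfKerEqSpanOne,
    Matrix.cons_val_zero, Matrix.cons_val_one, mul_one, hrepr ha, hrepr hc]
  simp only [Finsupp.coe_add, Pi.add_apply, Finsupp.single_eq_same, ne_eq, zero_ne_one,
    one_ne_zero, not_false_eq_true, Finsupp.single_eq_of_ne, add_zero, zero_add, hlamαα, hlamα]
  ring

end KernelSpanOne

theorem transfer_of_rank_one_form_similar_to_norm_form_general
    {F K : Type*} [Field F] [CommRing K] [Algebra F K]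
    (hchar : ringChar F ≠ 2)
    (hdim : finrank F K = 2)
    (s : K →ₗ[F] F)
    (hker : LinearMap.ker s = Submodule.span F {(1 : K)})
    (lam : K) (hlam : IsUnit lam) :
    ∃ c : F, c ≠ 0 ∧ ∃ φ : (Fin 2 → F) ≃ₗ[F] K, ∀ p : Fin 2 → F,
      s (lam * (φ p * φ p)) = c * ((p 0) ^ 2 - Algebra.norm F lam * (p 1) ^ 2) := by
  obtain ⟨α, hα⟩ := LinearMap.exists_apply_eq_one_of_ker_eq_span_one hker hdim
  have hnorm := LinearMap.algebraNorm_eq_of_ker_eq_span_one hker hα lam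
  have hdisc : s (lam * α) ^ 2 - s lam * s (lam * (α * α)) ≠ 0 :=
    hnorm ▸ (hlam.map (Algebra.norm F)).ne_zero
  obtain ⟨c, hc, M, hM⟩ := exists_linearEquiv_binary_form_similar (Ring.two_ne_zero hchar) hdisc
  let B := LinearMap.basisOneOfKerEqSpanOne hker hα
  refine ⟨c, hc, M.trans B.equivFun.symm, fun p => ?_⟩
  rw [hnorm, ← hM p, LinearEquiv.trans_apply, B.equivFun_symm_apply, Fin.sum_univ_two,
    LinearMap.coe_basisOneOfKerEqSpanOne, s.apply_mul_sq_smul_add_smul]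
  simp

/-- Let `char F ≠ 2`, `K` a quadratic étale `F`-algebra, `s : K → F` an `F`-linear
form with kernel exactly `F = F·1`, and `λ ∈ K×`.  Then the transfer `s_*(⟨λ⟩)`, i.e. the binary
quadratic form `x ↦ s(λx²)` on `K`, is similar to `⟨1, -N_{K/F}(λ)⟩`: there are `c ≠ 0` and a
linear isomorphism `φ : F² ≅ K` with `s(λ·(φ p)²) = c·((p 0)² - N_{K/F}(λ)·(p 1)²)`. -/
theorem transfer_of_rank_one_form_similar_to_norm_form
    {F K : Type*} [Field F] [CommRing K] [Algebra F K] [FiniteDimensional F K]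
    (hchar : ringChar F ≠ 2)
    (hdim : finrank F K = 2)
    (s : K →ₗ[F] F)
    (hker : LinearMap.ker s = Submodule.span F {(1 : K)})
    (lam : K) (hlam : IsUnit lam) :
    ∃ c : F, c ≠ 0 ∧ ∃ φ : (Fin 2 → F) ≃ₗ[F] K, ∀ p : Fin 2 → F,
      s (lam * (φ p * φ p)) = c * ((p 0) ^ 2 - Algebra.norm F lam * (p 1) ^ 2) :=
  transfer_of_rank_one_form_similar_to_norm_form_general hchar hdim s hker lam hlam
end
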